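/- Let (K, δ) be a differential field and f ∈ K{x} an irreducible differential polynomial with nonzero separant s_f. If g ∈ [f] (the differential ideal generated by f) has order at most the order of f, then g lies in the ordinary ideal (f) generated by f in the polynomial ring K{x}. -/

import Mathlib

set_option synthInstance.maxHeartbeats 1000000
set_option maxHeartbeats 1000000

open MvPolynomial
noncomputable section
variable {K : Type*} [Field K]

/-- order of a differential polynomial -/
def ordOf (f : MvPolynomial ℕ K) : ℕ := f.vars.sup id

/-- separant -/
def sep (f : MvPolynomial ℕ K) : MvPolynomial ℕ K := pderiv (ordOf f) f

/-- rank of a differential polynomial -/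
def rankOf (f : MvPolynomial ℕ K) : ℕ × ℕ := (ordOf f, f.degreeOf (ordOf f))

/-- the differential ideal generated by f -/
def diffIdeal (D : Derivation ℤ (MvPolynomial ℕ K) (MvPolynomial ℕ K))
    (f : MvPolynomial ℕ K) : Ideal (MvPolynomial ℕ K) :=
  Ideal.span (Set.range fun n : ℕ => (⇑D)^[n] f)

/-- saturation I : s^∞ -/
def saturation {R : Type*} [CommRing R] (J : Ideal R) (s : R) : Ideal R where
  carrier := {h | ∃ m : ℕ, s ^ m * h ∈ J}
  zero_mem' := ⟨0, by simp⟩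
  add_mem' := by
    rintro a b ⟨m, hm⟩ ⟨n, hn⟩
    refine ⟨m + n, ?_⟩
    have h : s ^ (m + n) * (a + b) = s ^ n * (s ^ m * a) + s ^ m * (s ^ n * b) := by ring
    rw [h]
    exact J.add_mem (J.mul_mem_left _ hm) (J.mul_mem_left _ hn)
  smul_mem' := by
    rintro c a ⟨m, hm⟩
    refine ⟨m, ?_⟩
    have h : s ^ m * (c • a) = c * (s ^ m * a) := by rw [smul_eq_mul]; ring
    rw [h]
    exact J.mul_mem_left _ hm

/-- evaluation of a differential polynomial at a point of K -/
def evalD (δ : Derivation ℤ K K) (a : K) (f : MvPolynomial ℕ K) : K :=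
  MvPolynomial.eval (fun n => (⇑δ)^[n] a) f

/-- the field of constants -/
def constants (δ : Derivation ℤ K K) : Subfield K where
  carrier := {a | δ a = 0}
  zero_mem' := by simp
  one_mem' := by simp
  add_mem' := by intro a b ha hb; simp only [Set.mem_setOf_eq] at *; rw [map_add, ha, hb, add_zero]
  mul_mem' := by
    intro a b ha hb; simp only [Set.mem_setOf_eq] at *
    rw [Derivation.leibniz, ha, hb]; simp
  neg_mem' := by intro a ha; simp only [Set.mem_setOf_eq] at *; rw [map_neg, ha, neg_zero]
  inv_mem' := by
    intro a ha
    simp only [Set.mem_setOf_eq] at *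
    rcases eq_or_ne a 0 with rfl | h
    · simp
    · have h1 : a * a⁻¹ = 1 := mul_inv_cancel₀ h
      have h2 : δ (a * a⁻¹) = 0 := by rw [h1]; exact δ.map_one_eq_zero
      rw [Derivation.leibniz, ha] at h2
      simp only [smul_eq_mul, mul_zero, add_zero, zero_mul, smul_zero] at h2
      exact (mul_eq_zero.mp h2).resolve_left h

/-- the SDCF axiom scheme -/
def SDCFAx (δ : Derivation ℤ K K) : Prop :=
  ∀ f g : MvPolynomial ℕ K, f ≠ 0 → g ≠ 0 → sep f ≠ 0 → ordOf g < ordOf f →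
    ∃ a : K, evalD δ a f = 0 ∧ evalD δ a g ≠ 0

/-!
Let `n = ord f`, let `B` be the fraction field of the domain `K{x}/(f)` and `ν : K{x} → B` the
canonical map. Since `s_f` has lower degree than `f` in `xₙ`, `f ∤ s_f`, so `ν s_f` is invertible.
Each `δ^(k+1) f` equals `s_f · x_(n+k+1)` plus terms of order `≤ n + k`, so solving for
`x_(n+k+1)` successively extends `(ν x₀, …, ν xₙ)` to a point of `B` at which every `δᵏ f`
vanishes. Evaluation at this point kills `[f]` and agrees with `ν` in order `≤ n`, hence
`ν g = 0`, i.e. `g ∈ (f)`.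
-/

theorem Nat.exists_eq_apply_of_dependsOn_lt {B : Type*} [Nonempty B] (F : ℕ → (ℕ → B) → B)
    (hF : ∀ i w w', (∀ j < i, w j = w' j) → F i w = F i w') :
    ∃ v : ℕ → B, ∀ i, v i = F i v := by
  obtain ⟨b⟩ := ‹Nonempty B›
  let v : ℕ → B := Nat.strongRec fun i rec => F i fun j => if h : j < i then rec j h else b
  refine ⟨v, fun i => ?_⟩
  rw [show v i = F i (fun j => if h : j < i then v j else b) from Nat.strongRec_eq _ i]
  exact hF i _ _ fun j hj => dif_pos hj

namespace MvPolynomial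

variable {R : Type*} [CommRing R]

theorem degreeOf_pderiv_lt {σ : Type*} {i : σ} {p : MvPolynomial σ R} (h : pderiv i p ≠ 0) :
    degreeOf i (pderiv i p) < degreeOf i p := by
  have hsupp : ∀ m ∈ (pderiv i p).support, m i + 1 ≤ degreeOf i p := by
    intro m hm
    rw [mem_support_iff, coeff_pderiv] at hm
    have := le_degreeOf_of_mem_support i (mem_support_iff.mpr (left_ne_zero_of_mul hm))
    simpa using this
  obtain ⟨m, hm⟩ := support_nonempty.mpr h
  rw [degreeOf_lt_iff (Nat.zero_lt_of_lt (hsupp m hm))]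
  exact hsupp

theorem not_dvd_pderiv [IsDomain R] {σ : Type*} {i : σ} {p : MvPolynomial σ R}
    (h : pderiv i p ≠ 0) : ¬ p ∣ pderiv i p := by
  rintro ⟨q, hq⟩
  have hp : p ≠ 0 := left_ne_zero_of_mul (hq ▸ h)
  have hq0 : q ≠ 0 := right_ne_zero_of_mul (hq ▸ h)
  have := degreeOf_pderiv_lt h
  rw [hq, degreeOf_mul_eq hp hq0] at this
  omega

theorem derivation_mem_supported {σ : Type*} {s : Set σ}
    (E : Derivation ℤ (MvPolynomial σ R) (MvPolynomial σ R))
    (hC : ∀ a, E (C a) ∈ supported R s) (hX : ∀ i ∈ s, E (X i) ∈ supported R s)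
    {p : MvPolynomial σ R} (hp : p ∈ supported R s) : E p ∈ supported R s := by
  induction hp using Algebra.adjoin_induction with
  | mem x hx => obtain ⟨i, hi, rfl⟩ := hx; exact hX i hi
  | algebraMap a => exact hC a
  | add x y _ _ hx hy => rw [map_add]; exact add_mem hx hy
  | mul x y hx hy ihx ihy =>
    rw [Derivation.leibniz, smul_eq_mul, smul_eq_mul]
    exact add_mem (mul_mem hx ihy) (mul_mem hy ihx)

theorem pderiv_mem_supported {σ : Type*} {s : Set σ} (i : σ) {p : MvPolynomial σ R}
    (hp : p ∈ supported R s) : pderiv i p ∈ supported R s := by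
  classical
  refine derivation_mem_supported ((pderiv i).restrictScalars ℤ) (fun a => ?_) (fun j _ => ?_) hp
  · simp
  · rw [Derivation.restrictScalars_apply, pderiv_X]
    by_cases hij : i = j
    · subst hij; simp
    · simp [Ne.symm hij]

section DifferentialPolynomial

variable {δ : Derivation ℤ R R} {D : Derivation ℤ (MvPolynomial ℕ R) (MvPolynomial ℕ R)}

theorem derivation_sub_pderiv_mul_X_mem_supported (hDX : ∀ n, D (X n) = X (n + 1))
    (hDC : ∀ a, D (C a) = C (δ a)) {m : ℕ} {p : MvPolynomial ℕ R}
    (hp : p ∈ supported R (Set.Iic m)) :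
    D p - pderiv m p * X (m + 1) ∈ supported R (Set.Iic m) := by
  have key := derivation_mem_supported
    (D - (X (m + 1) : MvPolynomial ℕ R) • (pderiv m).restrictScalars ℤ) (fun a => ?_)
    (fun i hi => ?_) hp
  · simpa [mul_comm] using key
  · simpa [hDC, pderiv_C] using Subalgebra.algebraMap_mem (supported R (Set.Iic m)) (δ a)
  · rw [Derivation.sub_apply, Derivation.smul_apply, Derivation.restrictScalars_apply, hDX,
      smul_eq_mul]
    obtain rfl | hlt := eq_or_lt_of_le (Set.mem_Iic.mp hi)
    · simp
    · rw [pderiv_X_of_ne hlt.ne, mul_zero, sub_zero]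
      exact Algebra.subset_adjoin ⟨i + 1, Set.mem_Iic.mpr hlt, rfl⟩

theorem derivation_mem_supported_Iic_succ (hDX : ∀ n, D (X n) = X (n + 1))
    (hDC : ∀ a, D (C a) = C (δ a)) {m : ℕ} {p : MvPolynomial ℕ R}
    (hp : p ∈ supported R (Set.Iic m)) : D p ∈ supported R (Set.Iic (m + 1)) := by
  have mono : supported R (Set.Iic m) ≤ supported R (Set.Iic (m + 1)) :=
    supported_mono (Set.Iic_subset_Iic.mpr m.le_succ)
  rw [← sub_add_cancel (D p) (pderiv m p * X (m + 1))]
  have hX : X (m + 1) ∈ supported R (Set.Iic (m + 1)) :=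
    Algebra.subset_adjoin ⟨m + 1, Set.mem_Iic.mpr le_rfl, rfl⟩
  exact add_mem (mono (derivation_sub_pderiv_mul_X_mem_supported hDX hDC hp))
    (mul_mem (mono (pderiv_mem_supported m hp)) hX)

theorem iterate_derivation_sub_pderiv_mul_X_mem_supported (hDX : ∀ n, D (X n) = X (n + 1))
    (hDC : ∀ a, D (C a) = C (δ a)) {m : ℕ} {p : MvPolynomial ℕ R}
    (hp : p ∈ supported R (Set.Iic m)) (k : ℕ) :
    (⇑D)^[k + 1] p - pderiv m p * X (m + k + 1) ∈ supported R (Set.Iic (m + k)) := by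
  induction k with
  | zero => simpa using derivation_sub_pderiv_mul_X_mem_supported hDX hDC hp
  | succ k ih =>
    set s := pderiv m p
    set r := (⇑D)^[k + 1] p - s * X (m + k + 1)
    have hsplit : (⇑D)^[k + 1] p = s * X (m + k + 1) + r := (add_sub_cancel _ _).symm
    have hrw : (⇑D)^[k + 1 + 1] p - s * X (m + k + 1 + 1) = X (m + k + 1) * D s + D r := by
      rw [Function.iterate_succ_apply', hsplit, map_add, Derivation.leibniz, hDX, smul_eq_mul,
        smul_eq_mul]
      ring
    have mono : ∀ j ≤ m + k + 1, supported R (Set.Iic j) ≤ supported R (Set.Iic (m + (k + 1))) :=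
      fun j hj => supported_mono (Set.Iic_subset_Iic.mpr (by omega))
    rw [show m + (k + 1) + 1 = m + k + 1 + 1 from rfl, hrw]
    have hX : X (m + k + 1) ∈ supported R (Set.Iic (m + (k + 1))) :=
      Algebra.subset_adjoin ⟨m + k + 1, Set.mem_Iic.mpr (by omega), rfl⟩
    refine add_mem (mul_mem hX ?_) ?_
    · exact mono _ (by omega)
        (derivation_mem_supported_Iic_succ hDX hDC (pderiv_mem_supported m hp))
    · exact mono _ le_rfl (derivation_mem_supported_Iic_succ hDX hDC ih)

theorem exists_eval₂_iterate_derivation_eq_zero (hDX : ∀ n, D (X n) = X (n + 1))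
    (hDC : ∀ a, D (C a) = C (δ a)) {B : Type*} [CommRing B] (ν : MvPolynomial ℕ R →+* B)
    {u : B} {m : ℕ} {p : MvPolynomial ℕ R} (hp : p ∈ supported R (Set.Iic m)) (hνp : ν p = 0)
    (hνs : ν (pderiv m p) * u = 1) :
    ∃ v : ℕ → B, (∀ q ∈ supported R (Set.Iic m), eval₂ (ν.comp C) v q = ν q) ∧
      ∀ k, eval₂ (ν.comp C) v ((⇑D)^[k] p) = 0 := by
  set r : ℕ → MvPolynomial ℕ R := fun k => (⇑D)^[k + 1] p - pderiv m p * X (m + k + 1)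
  have hr_supp := iterate_derivation_sub_pderiv_mul_X_mem_supported hDX hDC hp
  obtain ⟨v, hv⟩ := Nat.exists_eq_apply_of_dependsOn_lt
    (fun i w => if i ≤ m then ν (X i) else -eval₂ (ν.comp C) w (r (i - m - 1)) * u) <| by
      intro i w w' hww'
      split_ifs with hi
      · rfl
      · have hsupp := mem_supported.mp (hr_supp (i - m - 1))
        congr 2
        exact eval₂Hom_congr' rfl
          (fun j hj _ => hww' j (by have := Set.mem_Iic.mp (hsupp hj); omega)) rfl
  have hv_agree : ∀ q ∈ supported R (Set.Iic m), eval₂ (ν.comp C) v q = ν q := by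
    intro q hq
    refine hom_congr_vars (f₁ := eval₂Hom (ν.comp C) v) (by ext; simp) (fun i hi _ => ?_) rfl
    have hi : i ≤ m := by simpa using mem_supported.mp hq hi
    rw [eval₂Hom_X', hv, if_pos hi]
  refine ⟨v, hv_agree, fun k => ?_⟩
  cases k with
  | zero => rw [Function.iterate_zero_apply, hv_agree p hp, hνp]
  | succ k =>
    have hlead : v (m + k + 1) = -eval₂ (ν.comp C) v (r k) * u := by
      rw [hv, if_neg (by omega), show m + k + 1 - m - 1 = k by omega]
    rw [show (⇑D)^[k + 1] p = pderiv m p * X (m + k + 1) + r k from (add_sub_cancel _ _).symm,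
      eval₂_add, eval₂_mul, eval₂_X, hlead, hv_agree _ (pderiv_mem_supported m hp)]
    linear_combination (-eval₂ (ν.comp C) v (r k)) * hνs

theorem map_eq_zero_of_mem_span_iterate_derivation (hDX : ∀ n, D (X n) = X (n + 1))
    (hDC : ∀ a, D (C a) = C (δ a)) {B : Type*} [CommRing B] (ν : MvPolynomial ℕ R →+* B)
    {u : B} {m : ℕ} {p : MvPolynomial ℕ R} (hp : p ∈ supported R (Set.Iic m)) (hνp : ν p = 0)
    (hνs : ν (pderiv m p) * u = 1) {g : MvPolynomial ℕ R}
    (hg : g ∈ Ideal.span (Set.range fun k => (⇑D)^[k] p)) (hgm : g ∈ supported R (Set.Iic m)) :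
    ν g = 0 := by
  obtain ⟨v, hv_agree, hv_zero⟩ := exists_eval₂_iterate_derivation_eq_zero hDX hDC ν hp hνp hνs
  have hker : Ideal.span (Set.range fun k => (⇑D)^[k] p) ≤ RingHom.ker (eval₂Hom (ν.comp C) v) :=
    Ideal.span_le.mpr (Set.range_subset_iff.mpr hv_zero)
  rw [← hv_agree g hgm]
  exact hker hg

end DifferentialPolynomial

end MvPolynomial

theorem mem_supported_Iic_ordOf (p : MvPolynomial ℕ K) :
    p ∈ supported K (Set.Iic (ordOf p)) :=
  mem_supported.mpr fun _ hi => Finset.le_sup (f := id) (Finset.mem_coe.mp hi)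

theorem stmt5 {K : Type*} [Field K] (δ : Derivation ℤ K K)
    (D : Derivation ℤ (MvPolynomial ℕ K) (MvPolynomial ℕ K))
    (hDX : ∀ n : ℕ, D (X n) = X (n + 1))
    (hDC : ∀ a : K, D (C a) = C (δ a))
    (f : MvPolynomial ℕ K) (hf : Irreducible f) (hs : sep f ≠ 0)
    (g : MvPolynomial ℕ K) (hg : g ∈ diffIdeal D f) (hord : ordOf g ≤ ordOf f) :
    g ∈ Ideal.span {f} := by
  have : (Ideal.span {f}).IsPrime := (Ideal.span_singleton_prime hf.ne_zero).mpr hf.prime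
  set π := Ideal.Quotient.mk (Ideal.span {f})
  let ι := algebraMap (MvPolynomial ℕ K ⧸ Ideal.span {f})
    (FractionRing (MvPolynomial ℕ K ⧸ Ideal.span {f}))
  have hπf : π f = 0 := Ideal.Quotient.eq_zero_iff_mem.mpr (Ideal.mem_span_singleton_self f)
  have hπs : π (sep f) ≠ 0 := by
    rw [Ne, Ideal.Quotient.eq_zero_iff_mem, Ideal.mem_span_singleton]
    exact not_dvd_pderiv hs
  have hιs : ι (π (sep f)) ≠ 0 := (map_ne_zero_iff ι (IsFractionRing.injective _ _)).mpr hπs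
  have hg0 : (ι.comp π) g = 0 :=
    map_eq_zero_of_mem_span_iterate_derivation hDX hDC (ι.comp π) (mem_supported_Iic_ordOf f)
      (by simp [hπf]) (mul_inv_cancel₀ hιs) hg
      (supported_mono (Set.Iic_subset_Iic.mpr hord) (mem_supported_Iic_ordOf g))
  rw [RingHom.comp_apply, map_eq_zero_iff ι (IsFractionRing.injective _ _)] at hg0
  exact Ideal.Quotient.eq_zero_iff_mem.mp hg0
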